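/- arXiv:1809.04367 — 3 statements merged into one kernel-verified Lean document; each statement's English description precedes it below -/
import Mathlib

section
/- Let E be a countable set and p : E × E → [0,1] a transition probability, i.e. Σ_{y∈E} p(x,y) = 1 for every x ∈ E. Fix 0 < a < b < c < d and let λ, μ : E → ℝ satisfy a ≤ λ(x) ≤ b and c ≤ μ(x) ≤ d for all x ∈ E. Define the bounded generators (L_λ f)(x) = λ(x) Σ_{y∈E} p(x,y)(f(y) − f(x)) and (L_μ f)(x) = μ(x) Σ_{y∈E} p(x,y)(f(y) − f(x)) on the Banach space of bounded functions E → ℝ, and set Λ = sup_{x∈E} μ(x)/λ(x) (finite since Λ ≤ d/a). Then for every subset A ⊆ E, every z ∈ E and every t ≥ 0: ∫₀ᵗ (e^{sL_μ} 𝟙_A)(z) ds ≤ ∫₀^{Λt} (e^{sL_λ} 𝟙_A)(z) ds; that is, the expected local time of A up to time t for the Markov chain with jump chain p and holding rates μ is at most the expected local time of A up to time Λt for the chain with the same jump chain and holding rates λ. -/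
/-!
The two generators differ by the rate factor: `L_μ = κ L_λ` with
`κ = μ/λ ∈ [1, Λ]`. Put `U(s) = ∫₀ˢ e^{rL_μ} 𝟙_A dr` and `V(s) = ∫₀^{Λs} e^{rL_λ} 𝟙_A dr`, so that
`L_μ U(s) = e^{sL_μ} 𝟙_A - 𝟙_A` and `L_μ V(s) = κ (e^{ΛsL_λ} 𝟙_A - 𝟙_A)`. Then `W = V - U` vanishes
at `0` and solves `W' = L_μ W + g` with `g = (Λ - κ) e^{ΛsL_λ} 𝟙_A + (κ - 1) 𝟙_A ≥ 0`, so Duhamel's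
formula `W(t) = ∫₀ᵗ e^{(t-s)L_μ} g(s) ds` and positivity of the Markov semigroups give `W(t) ≥ 0`.
Positivity of `e^{sL}` for a jump generator follows from positivity of `L + d` for `d ≥ sup ρ`.
-/

open MeasureTheory Filter
open scoped BoundedContinuousFunction NNReal

/-- The operator exponential `e^{tA}` of a bounded operator `A`, applied to `f`:
`e^{tA} f = ∑_k (t^k / k!) A^k f`. -/
noncomputable def expApply {E : Type*} [NormedAddCommGroup E] [NormedSpace ℝ E]
    (A : E →L[ℝ] E) (t : ℝ) (f : E) : E :=
  ∑' k : ℕ, (t ^ k / (k.factorial : ℝ)) • ((A ^ k) f)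

open Classical

section OperatorExponential

variable {F : Type*} [NormedAddCommGroup F] [NormedSpace ℝ F] [CompleteSpace F]

lemma expApply_eq_exp_smul_apply (A : F →L[ℝ] F) (t : ℝ) (f : F) :
    expApply A t f = NormedSpace.exp (t • A) f := by
  have hsum := (ContinuousLinearMap.apply ℝ F f).map_tsum
    (NormedSpace.expSeries_summable' (𝕂 := ℝ) (t • A))
  rw [NormedSpace.exp_eq_tsum ℝ, expApply, ← ContinuousLinearMap.apply_apply f, hsum]
  congr 1 with n
  simp [smul_pow, smul_smul, div_eq_mul_inv, mul_comm]

@[simp]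
lemma expApply_zero (A : F →L[ℝ] F) (f : F) : expApply A 0 f = f := by
  simp [expApply_eq_exp_smul_apply]

lemma hasDerivAt_expApply (A : F →L[ℝ] F) (f : F) (s : ℝ) :
    HasDerivAt (fun u : ℝ => expApply A u f) (A (expApply A s f)) s := by
  simp only [expApply_eq_exp_smul_apply]
  simpa using (hasDerivAt_exp_smul_const' (𝕂 := ℝ) A s).clm_apply (hasDerivAt_const s f)

lemma continuous_expApply (A : F →L[ℝ] F) (f : F) : Continuous fun s : ℝ => expApply A s f :=
  continuous_iff_continuousAt.2 fun s => (hasDerivAt_expApply A f s).continuousAt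

lemma hasDerivAt_expApply_sub_apply (A : F →L[ℝ] F) (t : ℝ) {w : ℝ → F} {w' : F} {s : ℝ}
    (hw : HasDerivAt w w' s) :
    HasDerivAt (fun u : ℝ => expApply A (t - u) (w u)) (expApply A (t - s) (w' - A (w s))) s := by
  simp only [expApply_eq_exp_smul_apply]
  have hexp : HasDerivAt (fun u : ℝ => NormedSpace.exp ((t - u) • A))
      (-(A * NormedSpace.exp ((t - s) • A))) s := by
    simpa [Function.comp_def] using (hasDerivAt_exp_smul_const' (𝕂 := ℝ) A (t - s)).scomp s
      ((hasDerivAt_id s).const_sub t)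
  have hcomm : A * NormedSpace.exp ((t - s) • A) = NormedSpace.exp ((t - s) • A) * A :=
    ((Commute.refl A).smul_right (t - s)).exp_right
  convert hexp.clm_apply hw using 1
  rw [hcomm, map_sub]
  simp [sub_eq_neg_add]

lemma apply_integral_expApply (A : F →L[ℝ] F) (f : F) (s : ℝ) :
    A (∫ r in (0 : ℝ)..s, expApply A r f) = expApply A s f - f := by
  rw [← A.intervalIntegral_comp_comm ((continuous_expApply A f).intervalIntegrable 0 s),
    intervalIntegral.integral_eq_sub_of_hasDerivAt (fun r _ => hasDerivAt_expApply A f r)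
      ((A.continuous.comp (continuous_expApply A f)).intervalIntegrable 0 s),
    expApply_zero]

lemma expApply_add_smul_one (A : F →L[ℝ] F) (d s : ℝ) (f : F) :
    expApply (A + d • 1) s f = Real.exp (s * d) • expApply A s f := by
  have hcomm : Commute ((s * d) • (1 : F →L[ℝ] F)) (s • A) :=
    ((Commute.one_left _).smul_left _).smul_right _
  have hball (B : F →L[ℝ] F) :
      B ∈ Metric.eball 0 (NormedSpace.expSeries ℝ (F →L[ℝ] F)).radius := by
    simp [NormedSpace.expSeries_radius_eq_top]
  have hsplit : s • (A + d • 1) = (s * d) • (1 : F →L[ℝ] F) + s • A := by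
    rw [smul_add, smul_smul, add_comm]
  rw [expApply_eq_exp_smul_apply, expApply_eq_exp_smul_apply, hsplit,
    NormedSpace.exp_add_of_commute_of_mem_ball (𝕂 := ℝ) hcomm (hball _) (hball _),
    ← Algebra.algebraMap_eq_smul_one, ← NormedSpace.algebraMap_exp_comm, Real.exp_eq_exp_ℝ,
    Algebra.algebraMap_eq_smul_one]
  simp

end OperatorExponential

section BoundedFunctions

variable {E : Type*} [TopologicalSpace E]

def IsPositiveSemigroup (A : (E →ᵇ ℝ) →L[ℝ] (E →ᵇ ℝ)) : Prop :=
  ∀ s : ℝ, 0 ≤ s → ∀ f : E →ᵇ ℝ, 0 ≤ f → 0 ≤ expApply A s f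

lemma isPositiveSemigroup_of_nonneg_apply {B : (E →ᵇ ℝ) →L[ℝ] (E →ᵇ ℝ)}
    (hB : ∀ f, 0 ≤ f → 0 ≤ B f) : IsPositiveSemigroup B := by
  intro s hs f hf
  have hpow (n : ℕ) : 0 ≤ (B ^ n) f := by
    induction n with
    | zero => simpa using hf
    | succ n ih => rw [pow_succ']; exact hB _ ih
  refine tsum_nonneg fun n x => ?_
  simpa using mul_nonneg (by positivity : (0 : ℝ) ≤ s ^ n / n.factorial) (hpow n x)

/-- `e^{sA} = e^{-sd} e^{s(A + d)}`. -/
lemma isPositiveSemigroup_of_nonneg_add_smul_one {A : (E →ᵇ ℝ) →L[ℝ] (E →ᵇ ℝ)} {d : ℝ}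
    (hA : ∀ f, 0 ≤ f → 0 ≤ (A + d • 1) f) : IsPositiveSemigroup A := by
  intro s hs f hf x
  have h := isPositiveSemigroup_of_nonneg_apply hA s hs f hf x
  rw [expApply_add_smul_one] at h
  simpa [Real.exp_pos] using h

lemma intervalIntegral_expApply_apply (A : (E →ᵇ ℝ) →L[ℝ] (E →ᵇ ℝ)) (f : E →ᵇ ℝ)
    (a b : ℝ) (x : E) :
    (∫ s in a..b, expApply A s f) x = ∫ s in a..b, expApply A s f x :=
  ((BoundedContinuousFunction.evalCLM ℝ x).intervalIntegral_comp_comm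
    ((continuous_expApply A f).intervalIntegrable a b)).symm

end BoundedFunctions

lemma tsum_mul_sub_of_hasSum_one {ι : Type*} {q g : ι → ℝ} (hq : HasSum q 1)
    (hqg : Summable fun i => q i * g i) (c : ℝ) :
    ∑' i, q i * (g i - c) = ∑' i, q i * g i - c := by
  simp_rw [mul_sub]
  rw [hqg.tsum_sub (hq.summable.mul_right c), tsum_mul_right, hq.tsum_eq, one_mul]

section JumpGenerator

variable {E : Type*} [TopologicalSpace E]

/-- `L` generates the continuous-time Markov chain with jump chain `p` and holding rates `ρ`. -/
def IsJumpGenerator (p : E → E → ℝ) (ρ : E → ℝ) (L : (E →ᵇ ℝ) →L[ℝ] (E →ᵇ ℝ)) : Prop :=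
  ∀ (f : E →ᵇ ℝ) (x : E), L f x = ρ x * ∑' y : E, p x y * (f y - f x)

variable {p : E → E → ℝ} {ρ : E → ℝ} {L : (E →ᵇ ℝ) →L[ℝ] (E →ᵇ ℝ)}

lemma IsJumpGenerator.nonneg_add_smul_one_apply (hL : IsJumpGenerator p ρ L)
    (hp0 : ∀ x y, 0 ≤ p x y) (hp1 : ∀ x, HasSum (p x) 1) {d : ℝ} (hρ0 : ∀ x, 0 ≤ ρ x)
    (hρd : ∀ x, ρ x ≤ d) {f : E →ᵇ ℝ} (hf : 0 ≤ f) : 0 ≤ (L + d • 1) f := by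
  intro x
  show 0 ≤ ((L + d • 1) f) x
  have hsum : Summable fun y => p x y * f y :=
    (hp1 x).summable.mul_right ‖f‖ |>.of_norm_bounded fun y => by
      rw [norm_mul, Real.norm_of_nonneg (hp0 x y)]
      exact mul_le_mul_of_nonneg_left (f.norm_coe_le_norm y) (hp0 x y)
  have hjump : 0 ≤ ∑' y, p x y * f y := tsum_nonneg fun y => mul_nonneg (hp0 x y) (hf y)
  have hfx : 0 ≤ f x := hf x
  have hshift : ((L + d • 1) f) x = L f x + d * f x := by simp
  rw [hshift, hL f x, tsum_mul_sub_of_hasSum_one (hp1 x) hsum]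
  nlinarith [hρ0 x, hρd x]

lemma IsJumpGenerator.isPositiveSemigroup (hL : IsJumpGenerator p ρ L)
    (hp0 : ∀ x y, 0 ≤ p x y) (hp1 : ∀ x, HasSum (p x) 1) {d : ℝ} (hρ0 : ∀ x, 0 ≤ ρ x)
    (hρd : ∀ x, ρ x ≤ d) : IsPositiveSemigroup L :=
  isPositiveSemigroup_of_nonneg_add_smul_one fun _ hf =>
    hL.nonneg_add_smul_one_apply hp0 hp1 hρ0 hρd hf

lemma IsJumpGenerator.apply_eq_div_mul {ρ' : E → ℝ} {L' : (E →ᵇ ℝ) →L[ℝ] (E →ᵇ ℝ)}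
    (hL : IsJumpGenerator p ρ L) (hL' : IsJumpGenerator p ρ' L') {x : E} (hρx : ρ x ≠ 0)
    (f : E →ᵇ ℝ) : L' f x = ρ' x / ρ x * L f x := by
  rw [hL, hL', ← mul_assoc, div_mul_cancel₀ _ hρx]

end JumpGenerator

section Comparison

variable {E : Type*} [TopologicalSpace E]

/-- `s ↦ e^{(t-s)A} W(s)` is monotone on `[0, t]`, its derivative being `e^{(t-s)A} (W' - A W)`. -/
lemma nonneg_of_hasDerivAt_sub_apply_nonneg {A : (E →ᵇ ℝ) →L[ℝ] (E →ᵇ ℝ)}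
    (hA : IsPositiveSemigroup A) {W W' : ℝ → E →ᵇ ℝ} (hW : ∀ s, HasDerivAt W (W' s) s)
    (hW0 : W 0 = 0) {t : ℝ} (ht : 0 ≤ t) (hsub : ∀ s ∈ Set.Icc 0 t, 0 ≤ W' s - A (W s)) :
    0 ≤ W t := by
  intro x
  set φ : ℝ → ℝ := fun s => expApply A (t - s) (W s) x
  have hφ (s : ℝ) : HasDerivAt φ (expApply A (t - s) (W' s - A (W s)) x) s := by
    exact (BoundedContinuousFunction.evalCLM ℝ x).hasFDerivAt.comp_hasDerivAt s
      (hasDerivAt_expApply_sub_apply A t (hW s))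
  have hmono : MonotoneOn φ (Set.Icc 0 t) := by
    refine monotoneOn_of_hasDerivWithinAt_nonneg (convex_Icc 0 t)
      (fun s _ => (hφ s).continuousAt.continuousWithinAt) (fun s _ => (hφ s).hasDerivWithinAt)
      fun s hs => ?_
    rw [interior_Icc] at hs
    exact hA _ (by linarith [hs.2]) _ (hsub s (Set.Ioo_subset_Icc_self hs)) x
  calc (0 : ℝ) = φ 0 := by simp [φ, hW0, expApply_eq_exp_smul_apply]
    _ ≤ φ t := hmono (Set.left_mem_Icc.2 ht) (Set.right_mem_Icc.2 ht) ht
    _ = W t x := by simp [φ]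

/-- If `L₂ = κ L₁` with `1 ≤ κ ≤ M`, then `W(s) = ∫₀^{Ms} e^{rL₁} f dr - ∫₀^s e^{rL₂} f dr`
satisfies `W' - L₂ W = (M - κ) e^{MsL₁} f + (κ - 1) f ≥ 0`. -/
theorem integral_expApply_le_integral_expApply_mul {L₁ L₂ : (E →ᵇ ℝ) →L[ℝ] (E →ᵇ ℝ)}
    {κ : E → ℝ} {M : ℝ} (hL : ∀ f x, L₂ f x = κ x * L₁ f x) (hκ1 : ∀ x, 1 ≤ κ x)
    (hκM : ∀ x, κ x ≤ M) (h₁ : IsPositiveSemigroup L₁) (h₂ : IsPositiveSemigroup L₂)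
    {f : E →ᵇ ℝ} (hf : 0 ≤ f) {t : ℝ} (ht : 0 ≤ t) :
    ∫ s in (0 : ℝ)..t, expApply L₂ s f ≤ ∫ s in (0 : ℝ)..(M * t), expApply L₁ s f := by
  set U : ℝ → E →ᵇ ℝ := fun s => ∫ r in (0 : ℝ)..s, expApply L₂ r f
  set V : ℝ → E →ᵇ ℝ := fun s => ∫ r in (0 : ℝ)..(M * s), expApply L₁ r f
  have hU (s : ℝ) : HasDerivAt U (expApply L₂ s f) s :=
    ((continuous_expApply L₂ f).integral_hasStrictDerivAt 0 s).hasDerivAt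
  have hV (s : ℝ) : HasDerivAt V (M • expApply L₁ (M * s) f) s := by
    simpa [Function.comp_def] using
      ((continuous_expApply L₁ f).integral_hasStrictDerivAt 0 (M * s)).hasDerivAt.scomp s
        ((hasDerivAt_id s).const_mul M)
  rw [← sub_nonneg]
  refine nonneg_of_hasDerivAt_sub_apply_nonneg h₂ (fun s => (hV s).sub (hU s))
    (by simp [U, V]) ht fun s hs x => ?_
  have hLW : L₂ (V s - U s) x
      = κ x * (expApply L₁ (M * s) f x - f x) - (expApply L₂ s f x - f x) := by
    rw [map_sub, BoundedContinuousFunction.sub_apply, hL, apply_integral_expApply,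
      apply_integral_expApply]
    rfl
  have hM : 0 ≤ M * s := mul_nonneg ((zero_le_one.trans (hκ1 x)).trans (hκM x)) hs.1
  have hfast : 0 ≤ expApply L₁ (M * s) f x := h₁ _ hM f hf x
  have hfx : 0 ≤ f x := hf x
  show 0 ≤ (M • expApply L₁ (M * s) f - expApply L₂ s f - L₂ (V s - U s)) x
  simp only [BoundedContinuousFunction.sub_apply, BoundedContinuousFunction.smul_apply, hLW,
    smul_eq_mul]
  nlinarith [hκ1 x, hκM x]

end Comparison

theorem local_time_monotone_speed_change_general
    (E : Type) [TopologicalSpace E]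
    (p : E → E → ℝ) (hp0 : ∀ x y : E, 0 ≤ p x y) (hp1 : ∀ x : E, HasSum (p x) 1)
    (a b c d : ℝ) (ha : 0 < a) (hbc : b < c)
    (lam mu : E → ℝ)
    (hlam : ∀ x : E, lam x ∈ Set.Icc a b) (hmu : ∀ x : E, mu x ∈ Set.Icc c d)
    (Llam Lmu : (E →ᵇ ℝ) →L[ℝ] (E →ᵇ ℝ))
    (hLlam : ∀ f : E →ᵇ ℝ, ∀ x : E, Llam f x = lam x * ∑' y : E, p x y * (f y - f x))
    (hLmu : ∀ f : E →ᵇ ℝ, ∀ x : E, Lmu f x = mu x * ∑' y : E, p x y * (f y - f x))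
    (A : Set E) (χ : E →ᵇ ℝ) (hχ : ∀ x : E, χ x = if x ∈ A then 1 else 0)
    (z : E) (t : ℝ) (ht : 0 ≤ t) :
    (∫ s in (0 : ℝ)..t, expApply Lmu s χ z)
      ≤ ∫ s in (0 : ℝ)..((⨆ x : E, mu x / lam x) * t), expApply Llam s χ z := by
  have hlam_pos (x : E) : 0 < lam x := ha.trans_le (hlam x).1
  have hlam_le_mu (x : E) : lam x ≤ mu x := (hlam x).2.trans (hbc.le.trans (hmu x).1)
  have hbdd : BddAbove (Set.range fun x => mu x / lam x) := by
    refine ⟨d / a, Set.forall_mem_range.2 fun x => ?_⟩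
    have hd : 0 ≤ d := by linarith [hlam_pos x, hlam_le_mu x, (hmu x).2]
    exact div_le_div₀ hd (hmu x).2 ha (hlam x).1
  have hχ0 : 0 ≤ χ := fun x => by
    show 0 ≤ χ x
    rw [hχ]
    split_ifs <;> norm_num
  have hcomp := integral_expApply_le_integral_expApply_mul
    (fun f x => IsJumpGenerator.apply_eq_div_mul hLlam hLmu (hlam_pos x).ne' f)
    (fun x => (one_le_div (hlam_pos x)).2 (hlam_le_mu x)) (le_ciSup hbdd)
    (IsJumpGenerator.isPositiveSemigroup hLlam hp0 hp1 (fun x => (hlam_pos x).le)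
      fun x => (hlam x).2)
    (IsJumpGenerator.isPositiveSemigroup hLmu hp0 hp1
      (fun x => ((hlam_pos x).trans_le (hlam_le_mu x)).le) fun x => (hmu x).2)
    hχ0 ht
  rw [← intervalIntegral_expApply_apply, ← intervalIntegral_expApply_apply]
  exact hcomp z

/-- **Monotonicity of local times under a speed-up of the holding rates**
(Proposition 3.3). For two continuous-time Markov chains with the same jump chain `p`
and holding rates `λ ∈ [a,b]` resp. `μ ∈ [c,d]`, with `0 < a < b < c < d` and
`Λ = sup_x μ(x)/λ(x)`, the expected local time of any set `A` up to time `t` for the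
fast chain is at most the expected local time of `A` up to time `Λt` for the slow chain. -/
theorem local_time_monotone_speed_change
    (E : Type) [Countable E] [TopologicalSpace E] [DiscreteTopology E]
    (p : E → E → ℝ) (hp0 : ∀ x y : E, 0 ≤ p x y) (hp1 : ∀ x : E, HasSum (p x) 1)
    (a b c d : ℝ) (ha : 0 < a) (hab : a < b) (hbc : b < c) (hcd : c < d)
    (lam mu : E → ℝ)
    (hlam : ∀ x : E, lam x ∈ Set.Icc a b) (hmu : ∀ x : E, mu x ∈ Set.Icc c d)
    (Llam Lmu : (E →ᵇ ℝ) →L[ℝ] (E →ᵇ ℝ))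
    (hLlam : ∀ f : E →ᵇ ℝ, ∀ x : E, Llam f x = lam x * ∑' y : E, p x y * (f y - f x))
    (hLmu : ∀ f : E →ᵇ ℝ, ∀ x : E, Lmu f x = mu x * ∑' y : E, p x y * (f y - f x))
    (A : Set E) (χ : E →ᵇ ℝ) (hχ : ∀ x : E, χ x = if x ∈ A then 1 else 0)
    (z : E) (t : ℝ) (ht : 0 ≤ t) :
    (∫ s in (0 : ℝ)..t, expApply Lmu s χ z)
      ≤ ∫ s in (0 : ℝ)..((⨆ x : E, mu x / lam x) * t), expApply Llam s χ z :=
  local_time_monotone_speed_change_general E p hp0 hp1 a b c d ha hbc lam mu hlam hmu Llam Lmu hLlam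
    hLmu A χ hχ z t ht
end

section
/- Fix α > 0. For all n ∈ ℕ (n ≥ 1), all x, y ∈ ℤ and all t ≥ 0: (e^{t𝒜_n} 𝟙_{{y}})(x) + (e^{t𝒜_n} 𝟙_{{1−y}})(x) = (e^{tΔ} 𝟙_{{y}})(x) + (e^{tΔ} 𝟙_{{1−y}})(x). In probabilistic terms: for the random walk 𝐗 with slow bond generated by 𝒜_n and the simple symmetric random walk X on ℤ jumping at total rate 2 (generator Δ), one has P_x(𝐗_t = y) + P_x(𝐗_t = −y+1) = P_x(X_t = y) + P_x(X_t = −y+1). -/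
open MeasureTheory Filter
open scoped BoundedContinuousFunction NNReal

/-- The exchange rate of the bond `{x, x+1}`: `α/n` at the slow bond `{0,1}`, else `1`. -/
noncomputable def xi (α : ℝ) (n : ℕ) (x : ℤ) : ℝ := if x = 0 then α / n else 1

/-- The slow-bond generator `𝒜_n` acting pointwise on functions `f : ℤ → ℝ`. -/
noncomputable def slowGen (α : ℝ) (n : ℕ) (f : ℤ → ℝ) (x : ℤ) : ℝ :=
  xi α n x * (f (x + 1) - f x) + xi α n (x - 1) * (f (x - 1) - f x)

/-!
The reflection `z ↦ 1 - z` swaps the two endpoints of the slow bond `{0, 1}`, so a function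
invariant under it has no gradient across that bond, and there the slow-bond generator `𝒜_n`
coincides with the Laplacian. Both operators preserve reflection invariance, hence so do all
their powers, and the two exponentials agree on the invariant function `𝟙_{y} + 𝟙_{1-y}`.
-/

section ExpApply

variable {E : Type*} [NormedAddCommGroup E] [NormedSpace ℝ E]

theorem pow_apply_eq_of_eqOn_invariant {A B : E →L[ℝ] E} {p : E → Prop}
    (hB : ∀ f, p f → p (B f)) (hAB : ∀ f, p f → A f = B f) :
    ∀ (k : ℕ) {f : E}, p f → (A ^ k) f = (B ^ k) f := by
  intro k
  induction k with
  | zero => intro f _; rfl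
  | succ k ih =>
    intro f hf
    rw [pow_succ, pow_succ, mul_apply_eq_comp, mul_apply_eq_comp,
      hAB f hf, ih (hB f hf)]

theorem expApply_eq_of_eqOn_invariant {A B : E →L[ℝ] E} {p : E → Prop}
    (hB : ∀ f, p f → p (B f)) (hAB : ∀ f, p f → A f = B f) (t : ℝ) {f : E} (hf : p f) :
    expApply A t f = expApply B t f := by
  simp only [expApply, pow_apply_eq_of_eqOn_invariant hB hAB _ hf]

variable [CompleteSpace E]

theorem summable_expApply (A : E →L[ℝ] E) (t : ℝ) (f : E) :
    Summable fun k : ℕ => (t ^ k / (k.factorial : ℝ)) • ((A ^ k) f) := by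
  convert (NormedSpace.expSeries_summable' (𝕂 := ℝ) (t • A)).mapL
    (ContinuousLinearMap.apply ℝ E f) using 2 with k
  simp [smul_pow, div_eq_inv_mul, mul_smul]

theorem expApply_add (A : E →L[ℝ] E) (t : ℝ) (f g : E) :
    expApply A t (f + g) = expApply A t f + expApply A t g := by
  simp only [expApply, map_add, smul_add]
  exact (summable_expApply A t f).tsum_add (summable_expApply A t g)

end ExpApply

section Reflection

def discreteLaplacian (f : ℤ → ℝ) (z : ℤ) : ℝ := f (z + 1) + f (z - 1) - 2 * f z

def IsReflectionInvariant (f : ℤ → ℝ) : Prop := ∀ z, f (1 - z) = f z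

theorem IsReflectionInvariant.discreteLaplacian {f : ℤ → ℝ} (hf : IsReflectionInvariant f) :
    IsReflectionInvariant (discreteLaplacian f) := by
  intro z
  have hplus : f (1 - z + 1) = f (z - 1) := by rw [← hf (z - 1)]; ring_nf
  have hminus : f (1 - z - 1) = f (z + 1) := by rw [← hf (z + 1)]; ring_nf
  simp only [_root_.discreteLaplacian, hplus, hminus, hf z]
  ring

theorem slowGen_eq_discreteLaplacian (α : ℝ) (n : ℕ) {f : ℤ → ℝ}
    (hf : IsReflectionInvariant f) : slowGen α n f = discreteLaplacian f := by
  have h10 : f 1 = f 0 := by simpa using hf 0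
  ext z
  simp only [slowGen, discreteLaplacian, xi]
  rcases eq_or_ne z 0 with rfl | hz0
  · norm_num [h10]
    ring
  rcases eq_or_ne z 1 with rfl | hz1
  · norm_num [h10]
    ring
  · rw [if_neg hz0, if_neg (sub_ne_zero.mpr hz1)]
    ring

theorem isReflectionInvariant_indicator_add_indicator (y : ℤ) :
    IsReflectionInvariant fun z =>
      (if z = y then 1 else 0) + if z = 1 - y then (1 : ℝ) else 0 := by
  intro z
  dsimp only
  split_ifs <;> first | omega | norm_num

end Reflection

theorem slow_bond_reflection_identity_general
    (α : ℝ) (n : ℕ)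
    (A Dlap : (ℤ →ᵇ ℝ) →L[ℝ] (ℤ →ᵇ ℝ))
    (hA : ∀ f : ℤ →ᵇ ℝ, ∀ x : ℤ,
      A f x = xi α n x * (f (x + 1) - f x) + xi α n (x - 1) * (f (x - 1) - f x))
    (hDlap : ∀ f : ℤ →ᵇ ℝ, ∀ x : ℤ, Dlap f x = f (x + 1) + f (x - 1) - 2 * f x)
    (x y : ℤ) (t : ℝ)
    (χy χry : ℤ →ᵇ ℝ)
    (hχy : ∀ z : ℤ, χy z = if z = y then 1 else 0)
    (hχry : ∀ z : ℤ, χry z = if z = 1 - y then 1 else 0) :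
    expApply A t χy x + expApply A t χry x
      = expApply Dlap t χy x + expApply Dlap t χry x := by
  have hDlap_eq : ∀ f : ℤ →ᵇ ℝ, ⇑(Dlap f) = discreteLaplacian f :=
    fun f => funext (hDlap f)
  have hA_eq : ∀ f : ℤ →ᵇ ℝ, ⇑(A f) = slowGen α n f := fun f => funext (hA f)
  have hχ : IsReflectionInvariant ⇑(χy + χry) := by
    intro z
    simp only [BoundedContinuousFunction.coe_add, Pi.add_apply, hχy, hχry]
    exact isReflectionInvariant_indicator_add_indicator y z
  have hexp : expApply A t (χy + χry) = expApply Dlap t (χy + χry) :=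
    expApply_eq_of_eqOn_invariant (p := fun f : ℤ →ᵇ ℝ => IsReflectionInvariant ⇑f)
      (fun f hf => by simpa [hDlap_eq] using hf.discreteLaplacian)
      (fun f hf => DFunLike.coe_injective <| by
        rw [hA_eq, hDlap_eq, slowGen_eq_discreteLaplacian α n hf])
      t hχ
  simpa only [expApply_add, BoundedContinuousFunction.coe_add, Pi.add_apply] using
    congrArg (· x) hexp

/-- **Reflection identity for the slow-bond walk** (Lemma 3.6). For the random walk `𝐗`
with slow bond (generator `𝒜_n`) and the simple symmetric walk `X` on `ℤ` jumping at total
rate `2` (generator the discrete Laplacian), for all `x, y ∈ ℤ` and `t ≥ 0`: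
`P_x(𝐗_t = y) + P_x(𝐗_t = 1−y) = P_x(X_t = y) + P_x(X_t = 1−y)`. -/
theorem slow_bond_reflection_identity
    (α : ℝ) (hα : 0 < α) (n : ℕ) (hn : 1 ≤ n)
    (A Dlap : (ℤ →ᵇ ℝ) →L[ℝ] (ℤ →ᵇ ℝ))
    (hA : ∀ f : ℤ →ᵇ ℝ, ∀ x : ℤ,
      A f x = xi α n x * (f (x + 1) - f x) + xi α n (x - 1) * (f (x - 1) - f x))
    (hDlap : ∀ f : ℤ →ᵇ ℝ, ∀ x : ℤ, Dlap f x = f (x + 1) + f (x - 1) - 2 * f x)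
    (x y : ℤ) (t : ℝ) (ht : 0 ≤ t)
    (χy χry : ℤ →ᵇ ℝ)
    (hχy : ∀ z : ℤ, χy z = if z = y then 1 else 0)
    (hχry : ∀ z : ℤ, χry z = if z = 1 - y then 1 else 0) :
    expApply A t χy x + expApply A t χry x
      = expApply Dlap t χy x + expApply Dlap t χry x :=
  slow_bond_reflection_identity_general α n A Dlap hA hDlap x y t χy χry hχy hχry
end

section
/- For every integer m ≥ 1, the central binomial coefficient satisfies C(2m,m) / 4^m ≤ 1 / √(π m); equivalently, C(2m,m) · √(π m) ≤ 4^m. -/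
/-!
With Stirling's sequence `s n = n! / (√(2n) (n/e)^n)`, one has
`C(2m, m) / 4^m = s(2m) / (s(m)^2 √m)`. Since `s` decreases on the positive integers to its limit
`√π`, we get `s(2m) ≤ s(m)` and `√π ≤ s(m)`, whence `C(2m, m) / 4^m ≤ 1 / (s(m) √m) ≤ 1 / √(πm)`.
-/

open Real Stirling

theorem stirlingSeq_two_mul_le (m : ℕ) : stirlingSeq (2 * m) ≤ stirlingSeq m := by
  cases m with
  | zero => simp
  | succ k => simpa [mul_add] using stirlingSeq'_antitone (show k ≤ 2 * k + 1 by omega)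

theorem choose_two_mul_div_four_pow_eq_stirlingSeq {m : ℕ} (hm : m ≠ 0) :
    (Nat.choose (2 * m) m : ℝ) / 4 ^ m = stirlingSeq (2 * m) / stirlingSeq m ^ 2 / √m := by
  have hfac : ((2 * m).factorial : ℝ) = (2 * m).choose m * m.factorial * m.factorial := by
    rw [two_mul]; exact_mod_cast (Nat.add_choose_mul_factorial_mul_factorial m m).symm
  have hsqrt₁ : √(2 * m : ℝ) = √2 * √m := sqrt_mul zero_le_two _
  have hsqrt₂ : √(2 * (2 * m : ℕ) : ℝ) = 2 * √m := by
    rw [Nat.cast_mul, Nat.cast_ofNat, ← mul_assoc, sqrt_mul (by norm_num)]; norm_num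
  have hpow : ((2 * m : ℕ) / exp 1 : ℝ) ^ (2 * m) = 4 ^ m * ((m / exp 1) ^ m) ^ 2 := by
    rw [Nat.cast_mul, Nat.cast_ofNat, mul_div_assoc, mul_pow, pow_mul (2 : ℝ)]; ring
  simp only [stirlingSeq, hsqrt₁, hsqrt₂, hfac, hpow]
  field_simp
  rw [sq_sqrt zero_le_two]

/-- **Stirling-type bound for the central binomial coefficient**: for every `m ≥ 1`,
`C(2m, m)/4^m ≤ 1/√(πm)`. -/
theorem centralBinom_div_four_pow_le (m : ℕ) (hm : 1 ≤ m) :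
    (Nat.choose (2 * m) m : ℝ) / 4 ^ m ≤ 1 / Real.sqrt (Real.pi * m) := by
  have hm₀ : m ≠ 0 := Nat.one_le_iff_ne_zero.mp hm
  have hπ : √π ≤ stirlingSeq m := sqrt_pi_le_stirlingSeq hm₀
  have hpos : 0 < stirlingSeq m := (sqrt_pos.mpr pi_pos).trans_le hπ
  calc (Nat.choose (2 * m) m : ℝ) / 4 ^ m
      = stirlingSeq (2 * m) / stirlingSeq m ^ 2 / √m :=
        choose_two_mul_div_four_pow_eq_stirlingSeq hm₀
    _ ≤ stirlingSeq m / stirlingSeq m ^ 2 / √m := by gcongr; exact stirlingSeq_two_mul_le m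
    _ = 1 / stirlingSeq m / √m := by rw [sq, div_mul_cancel_left₀ hpos.ne', one_div]
    _ ≤ 1 / √π / √m := by gcongr
    _ = 1 / √(π * m) := by rw [sqrt_mul pi_pos.le, div_div]
end
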